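/- The map φ (sending a word α over Ñ∖{0} to (−1)^{ℓ_ε(α)} ᾱ if α's first entry is a positive integer or α is empty, and to 0 otherwise) is a surjective algebra homomorphism from the quasi-shuffle algebra of words over Ñ∖{0} to the quasi-shuffle algebra of words over the positive integers. -/

import Mathlib

/-!
Let `ψ α = (−1)^{ℓ_ε(α)} ᾱ` be `φ` without the condition on the first letter. Then `ψ` is
already a quasi-shuffle homomorphism, by induction along the recursion
`(a,α)*(b,β) = (a, α*(b,β)) + (b, (a,α)*β) + (a+b, α*β)`: a leading `ε` only costs a sign,
`ψ(ε,γ) = −ψ γ`, and if exactly one of `a`, `b` is `ε` then `a + b` is the other letter, so the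
two terms starting with it cancel after applying `ψ`. Since `φ(a,γ) = (a, ψ γ)` for `a ≠ ε` and
`φ(ε,γ) = 0`, unfolding the recursion once turns the homomorphism property of `ψ` into that of `φ`,
the same cancellation killing the products with exactly one factor starting with `ε`.
Surjectivity holds because `φ` fixes every word over the positive integers.
-/

/-- The quasi-shuffle product of two words over a commutative monoid `B`,
valued in the free `k`-module on words:
`∅*α = α*∅ = α` and `(a,α)*(b,β) = (a, α*(b,β)) + (b, (a,α)*β) + (a+b, α*β)`. -/
noncomputable def qs (k : Type*) [CommRing k] {B : Type*} [AddCommMonoid B] :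
    List B → List B → (List B →₀ k)
  | [], β => Finsupp.single β 1
  | α, [] => Finsupp.single α 1
  | a :: α, b :: β =>
      Finsupp.mapDomain (List.cons a) (qs k α (b :: β)) +
      Finsupp.mapDomain (List.cons b) (qs k (a :: α) β) +
      Finsupp.mapDomain (List.cons (a + b)) (qs k α β)
  termination_by α β => α.length + β.length

/-- The bilinear extension of the quasi-shuffle product to the free module. -/
noncomputable def qsMul {k : Type*} [CommRing k] {B : Type*} [AddCommMonoid B]
    (f g : List B →₀ k) : List B →₀ k :=
  f.sum fun α c => g.sum fun β d => (c * d) • qs k α β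

/-- The map `φ` on words over the monoid `Ñ∖{0}` (identified with `(ℕ,+)` via
the isomorphism `θ` sending `ε` to `0`, so that `ε`-entries are `0`-entries):
`φ(α) = (−1)^{ℓ_ε(α)} ᾱ` if `α` is empty or its first entry is a positive
integer, and `φ(α) = 0` if the first entry is `ε`; here `ℓ_ε(α)` is the number
of `ε`-entries and `ᾱ` deletes all `ε`-entries (yielding a word over `ℙ`). -/
noncomputable def phi (k : Type*) [CommRing k] (α : List ℕ) : List ℕ →₀ k :=
  if α.head? = some 0 then 0
  else (-1 : k) ^ (α.count 0) • Finsupp.single (α.filter (· ≠ 0)) 1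

/-- The linear extension of `φ` to the free module on words. -/
noncomputable def phiHom (k : Type*) [CommRing k] (f : List ℕ →₀ k) : List ℕ →₀ k :=
  f.sum fun α c => c • phi k α

section Words

variable (k : Type*) [CommRing k] {B : Type*}

noncomputable def consₗ (a : B) : (List B →₀ k) →ₗ[k] (List B →₀ k) :=
  Finsupp.lmapDomain k k (List.cons a)

variable {k} in
theorem consₗ_single (a : B) (α : List B) (c : k) :
    consₗ k a (Finsupp.single α c) = Finsupp.single (a :: α) c := by
  simp [consₗ]

variable [AddCommMonoid B]

theorem qs_nil_left (β : List B) : qs k [] β = Finsupp.single β 1 := by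
  rw [qs]

theorem qs_nil_right (α : List B) : qs k α [] = Finsupp.single α 1 := by
  cases α <;> simp [qs]

theorem qs_cons_cons (a b : B) (α β : List B) :
    qs k (a :: α) (b :: β) =
      consₗ k a (qs k α (b :: β)) + consₗ k b (qs k (a :: α) β) + consₗ k (a + b) (qs k α β) := by
  rw [qs]
  rfl

noncomputable def qsMulₗ : (List B →₀ k) →ₗ[k] (List B →₀ k) →ₗ[k] (List B →₀ k) :=
  Finsupp.lsum k fun α => LinearMap.toSpanSingleton k _ <|
    Finsupp.linearCombination k (qs k α)

variable {k}

theorem qsMulₗ_apply (f g : List B →₀ k) : qsMulₗ k f g = qsMul f g := by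
  simp [qsMulₗ, qsMul, Finsupp.linearCombination_apply, Finsupp.smul_sum, mul_smul]

theorem qsMulₗ_single_single (α β : List B) (c d : k) :
    qsMulₗ k (Finsupp.single α c) (Finsupp.single β d) = (c * d) • qs k α β := by
  simp [qsMulₗ, mul_smul]

theorem qsMulₗ_one_left (f : List B →₀ k) : qsMulₗ k (Finsupp.single [] 1) f = f := by
  induction f using Finsupp.induction_linear with
  | zero => simp
  | add f g hf hg => simp [hf, hg]
  | single α c => simp [qsMulₗ_single_single, qs_nil_left]

theorem qsMulₗ_one_right (f : List B →₀ k) : qsMulₗ k f (Finsupp.single [] 1) = f := by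
  induction f using Finsupp.induction_linear with
  | zero => simp
  | add f g hf hg => simp [hf, hg]
  | single α c => simp [qsMulₗ_single_single, qs_nil_right]

theorem qsMulₗ_consₗ_consₗ (a b : B) (f g : List B →₀ k) :
    qsMulₗ k (consₗ k a f) (consₗ k b g) =
      consₗ k a (qsMulₗ k f (consₗ k b g)) + consₗ k b (qsMulₗ k (consₗ k a f) g) +
      consₗ k (a + b) (qsMulₗ k f g) := by
  induction f using Finsupp.induction_linear with
  | zero => simp
  | add f₁ f₂ h₁ h₂ => simp only [map_add, LinearMap.add_apply, h₁, h₂]; abel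
  | single α c =>
    induction g using Finsupp.induction_linear with
    | zero => simp
    | add g₁ g₂ h₁ h₂ => simp only [map_add, h₁, h₂]; abel
    | single β d =>
      simp only [consₗ_single, qsMulₗ_single_single, qs_cons_cons, map_smul, smul_add]

end Words

section Phi

variable (k : Type*) [CommRing k]

noncomputable def psi (α : List ℕ) : List ℕ →₀ k :=
  (-1 : k) ^ (α.count 0) • Finsupp.single (α.filter (· ≠ 0)) 1

variable {k}

theorem phiHom_eq_linearCombination : phiHom k = Finsupp.linearCombination k (phi k) := rfl

theorem psi_nil : psi k [] = Finsupp.single [] 1 := by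
  simp [psi]

theorem psi_cons_zero (α : List ℕ) : psi k (0 :: α) = -psi k α := by
  simp [psi, pow_succ]

theorem psi_cons_of_ne_zero {a : ℕ} (ha : a ≠ 0) (α : List ℕ) :
    psi k (a :: α) = consₗ k a (psi k α) := by
  simp [psi, ha, consₗ_single]

theorem phi_cons_zero (α : List ℕ) : phi k (0 :: α) = 0 := by
  simp [phi]

theorem phi_eq_psi {α : List ℕ} (hα : α.head? ≠ some 0) : phi k α = psi k α := by
  simp [phi, psi, hα]

theorem phi_cons_of_ne_zero {a : ℕ} (ha : a ≠ 0) (α : List ℕ) :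
    phi k (a :: α) = consₗ k a (psi k α) := by
  rw [phi_eq_psi (by simpa using ha), psi_cons_of_ne_zero ha]

theorem phi_nil : phi k [] = Finsupp.single [] 1 := by
  simp [phi]

theorem linearCombination_psi_consₗ_zero (f : List ℕ →₀ k) :
    Finsupp.linearCombination k (psi k) (consₗ k 0 f) =
      -Finsupp.linearCombination k (psi k) f := by
  induction f using Finsupp.induction_linear with
  | zero => simp
  | add f g hf hg => simp only [map_add, hf, hg, neg_add]
  | single α c => simp [consₗ_single, psi_cons_zero]

theorem linearCombination_psi_consₗ {a : ℕ} (ha : a ≠ 0) (f : List ℕ →₀ k) :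
    Finsupp.linearCombination k (psi k) (consₗ k a f) =
      consₗ k a (Finsupp.linearCombination k (psi k) f) := by
  induction f using Finsupp.induction_linear with
  | zero => simp
  | add f g hf hg => simp only [map_add, hf, hg]
  | single α c => simp [consₗ_single, psi_cons_of_ne_zero ha]

theorem linearCombination_psi_qs (α β : List ℕ) :
    Finsupp.linearCombination k (psi k) (qs k α β) = qsMulₗ k (psi k α) (psi k β) := by
  match α, β with
  | [], β => simp [qs_nil_left, psi_nil, qsMulₗ_one_left]
  | a :: α, [] => simp [qs_nil_right, psi_nil, qsMulₗ_one_right]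
  | a :: α, b :: β =>
    have ih₁ := linearCombination_psi_qs α (b :: β)
    have ih₂ := linearCombination_psi_qs (a :: α) β
    have ih₃ := linearCombination_psi_qs α β
    rw [qs_cons_cons]
    simp only [map_add]
    rcases eq_or_ne a 0 with rfl | ha <;> rcases eq_or_ne b 0 with rfl | hb
    · simp only [linearCombination_psi_consₗ_zero, add_zero, ih₁, ih₂, ih₃, psi_cons_zero,
        map_neg, LinearMap.neg_apply]
      abel
    · simp only [linearCombination_psi_consₗ_zero, linearCombination_psi_consₗ hb, zero_add,
        ih₁, ih₂, ih₃, psi_cons_zero, map_neg, LinearMap.neg_apply]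
      abel
    · simp only [linearCombination_psi_consₗ_zero, linearCombination_psi_consₗ ha, add_zero,
        ih₁, ih₂, ih₃, psi_cons_zero, map_neg]
      abel
    · have hab : a + b ≠ 0 := by omega
      simp only [linearCombination_psi_consₗ ha, linearCombination_psi_consₗ hb,
        linearCombination_psi_consₗ hab,
        ih₁, ih₂, ih₃, psi_cons_of_ne_zero ha, psi_cons_of_ne_zero hb, qsMulₗ_consₗ_consₗ]
  termination_by α.length + β.length

theorem linearCombination_phi_consₗ_zero (f : List ℕ →₀ k) :
    Finsupp.linearCombination k (phi k) (consₗ k 0 f) = 0 := by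
  induction f using Finsupp.induction_linear with
  | zero => simp
  | add f g hf hg => simp only [map_add, hf, hg, add_zero]
  | single α c => simp [consₗ_single, phi_cons_zero]

theorem linearCombination_phi_consₗ {a : ℕ} (ha : a ≠ 0) (f : List ℕ →₀ k) :
    Finsupp.linearCombination k (phi k) (consₗ k a f) =
      consₗ k a (Finsupp.linearCombination k (psi k) f) := by
  induction f using Finsupp.induction_linear with
  | zero => simp
  | add f g hf hg => simp only [map_add, hf, hg]
  | single α c => simp [consₗ_single, phi_cons_of_ne_zero ha]

theorem linearCombination_phi_qs (α β : List ℕ) :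
    Finsupp.linearCombination k (phi k) (qs k α β) = qsMulₗ k (phi k α) (phi k β) := by
  match α, β with
  | [], β => simp [qs_nil_left, phi_nil, qsMulₗ_one_left]
  | a :: α, [] => simp [qs_nil_right, phi_nil, qsMulₗ_one_right]
  | a :: α, b :: β =>
    rw [qs_cons_cons]
    simp only [map_add]
    rcases eq_or_ne a 0 with rfl | ha <;> rcases eq_or_ne b 0 with rfl | hb
    · simp [linearCombination_phi_consₗ_zero, phi_cons_zero]
    · simp [linearCombination_phi_consₗ_zero, linearCombination_phi_consₗ hb, phi_cons_zero,
        linearCombination_psi_qs, psi_cons_zero]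
    · simp [linearCombination_phi_consₗ_zero, linearCombination_phi_consₗ ha, phi_cons_zero,
        linearCombination_psi_qs, psi_cons_zero]
    · have hab : a + b ≠ 0 := by omega
      simp only [linearCombination_phi_consₗ ha, linearCombination_phi_consₗ hb,
        linearCombination_phi_consₗ hab, linearCombination_psi_qs, phi_cons_of_ne_zero ha,
        phi_cons_of_ne_zero hb, psi_cons_of_ne_zero ha, psi_cons_of_ne_zero hb,
        qsMulₗ_consₗ_consₗ]

theorem phiHom_qsMul (f g : List ℕ →₀ k) :
    phiHom k (qsMul f g) = qsMul (phiHom k f) (phiHom k g) := by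
  have h : (qsMulₗ k).compr₂ (Finsupp.linearCombination k (phi k)) =
      (qsMulₗ k ∘ₗ Finsupp.linearCombination k (phi k)).compl₂
        (Finsupp.linearCombination k (phi k)) := by
    ext α β
    simp [qsMulₗ_single_single, linearCombination_phi_qs]
  rw [phiHom_eq_linearCombination, ← qsMulₗ_apply, ← qsMulₗ_apply]
  exact LinearMap.congr_fun₂ h f g

theorem phi_of_forall_pos {α : List ℕ} (hα : ∀ x ∈ α, 0 < x) : phi k α = Finsupp.single α 1 := by
  have h0 : 0 ∉ α := fun h => (hα 0 h).false
  have hhead : α.head? ≠ some 0 := fun h => h0 (List.mem_of_mem_head? h)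
  have hfilter : α.filter (· ≠ 0) = α := List.filter_eq_self.mpr fun x hx => by
    simpa [Nat.pos_iff_ne_zero] using hα x hx
  rw [phi, if_neg hhead, List.count_eq_zero_of_not_mem h0, hfilter, pow_zero, one_smul]

theorem phi_mem_span (α : List ℕ) :
    phi k α ∈ Submodule.span k {h : List ℕ →₀ k |
      ∃ l : List ℕ, (∀ x ∈ l, 0 < x) ∧ h = Finsupp.single l 1} := by
  by_cases hα : α.head? = some 0
  · simp [phi, hα]
  · rw [phi_eq_psi hα, psi]
    refine Submodule.smul_mem _ _ (Submodule.subset_span ⟨_, fun x hx => ?_, rfl⟩)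
    simpa [Nat.pos_iff_ne_zero] using List.of_mem_filter hx

theorem range_phiHom :
    Set.range (phiHom k) =
      (Submodule.span k {h : List ℕ →₀ k |
        ∃ l : List ℕ, (∀ x ∈ l, 0 < x) ∧ h = Finsupp.single l 1} : Set (List ℕ →₀ k)) := by
  rw [phiHom_eq_linearCombination, ← LinearMap.coe_range, Finsupp.range_linearCombination]
  congr 1
  refine le_antisymm (Submodule.span_le.mpr ?_) (Submodule.span_mono ?_)
  · rintro _ ⟨α, rfl⟩
    exact phi_mem_span α
  · rintro _ ⟨l, hl, rfl⟩
    exact ⟨l, phi_of_forall_pos hl⟩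

end Phi

/-- `φ` is a surjective algebra homomorphism from the quasi-shuffle algebra of
words over `Ñ∖{0}` to the quasi-shuffle algebra of words over the positive
integers (the span of words all of whose entries are positive): it is unital,
multiplicative, and its range is exactly that span. -/
theorem stmt_18 (k : Type*) [CommRing k] :
    phiHom k (Finsupp.single [] 1) = Finsupp.single ([] : List ℕ) (1 : k) ∧
    (∀ f g : List ℕ →₀ k, phiHom k (qsMul f g) = qsMul (phiHom k f) (phiHom k g)) ∧
    Set.range (phiHom k) =
      (Submodule.span k {h : List ℕ →₀ k |
        ∃ l : List ℕ, (∀ x ∈ l, 0 < x) ∧ h = Finsupp.single l 1} : Set (List ℕ →₀ k)) := by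
  refine ⟨?_, phiHom_qsMul, range_phiHom⟩
  simp [phiHom_eq_linearCombination, phi_nil]
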